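/- arXiv:2604.07708 — 2 statements merged into one kernel-verified Lean document; each statement's English description precedes it below -/
import Mathlib

section
/- For any s ∈ (0,1), one has the identity ∫₀^∞ sin(t)/t^{1+s} dt = Γ((1+s)/2)·Γ((1-s)/2) / (2·Γ(1+s)), where Γ is the Euler Gamma function. -/
/-!
Write `t^{-(1+s)} = Γ(1+s)⁻¹ ∫₀^∞ x^s e^{-tx} dx` and swap the integrals: since
`∫₀^∞ e^{-xt} sin t dt = 1/(1+x²)`, the integral becomes `Γ(1+s)⁻¹ ∫₀^∞ x^s/(1+x²) dx`.
The same trick, `1/(1+x²) = ∫₀^∞ e^{-(1+x²)y} dy` followed by a Gaussian integral in `x`,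
turns this into `Γ((1+s)/2)/2 · ∫₀^∞ e^{-y} y^{(1-s)/2-1} dy = Γ((1+s)/2) Γ((1-s)/2)/2`.
In both swaps the kernel is nonnegative, so Fubini only needs the integrability of the
iterated integral.
-/

open MeasureTheory Set Real Function

section Fubini

variable {α β : Type*} [MeasurableSpace α] [MeasurableSpace β] {μ : Measure α} {ν : Measure β}
  [SFinite μ] [SFinite ν]

theorem integral_mul_integral_eq_integral_integral_of_nonneg {f : α → ℝ} {K : α → β → ℝ}
    (hm : AEStronglyMeasurable (uncurry fun a b => f a * K a b) (μ.prod ν))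
    (hK : ∀ᵐ a ∂μ, 0 ≤ᵐ[ν] K a ∧ Integrable (K a) ν)
    (hf : Integrable (fun a => f a * ∫ b, K a b ∂ν) μ) :
    ∫ a, f a * ∫ b, K a b ∂ν ∂μ = ∫ b, ∫ a, f a * K a b ∂μ ∂ν := by
  have hint : Integrable (uncurry fun a b => f a * K a b) (μ.prod ν) := by
    refine (integrable_prod_iff hm).2 ⟨?_, hf.norm.congr ?_⟩
    · filter_upwards [hK] with a ha using ha.2.const_mul (f a)
    · filter_upwards [hK] with a ha
      obtain ⟨hK₀, -⟩ := ha
      have habs : ∫ b, |K a b| ∂ν = ∫ b, K a b ∂ν :=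
        integral_congr_ae (hK₀.mono fun b hb => abs_of_nonneg hb)
      simp only [uncurry_apply_pair, norm_mul, norm_eq_abs, integral_const_mul, habs,
        abs_of_nonneg (integral_nonneg_of_ae hK₀)]
  simp_rw [← integral_const_mul]
  exact integral_integral_swap hint

end Fubini

theorem integrableOn_Ioi_of_norm_le_rpow {E : Type*} [NormedAddCommGroup E] {f : ℝ → E}
    {a b : ℝ} (ha : -1 < a) (hb : b < -1) (hf : AEStronglyMeasurable f (volume.restrict (Ioi 0)))
    (h₀ : ∀ x ∈ Ioc 0 1, ‖f x‖ ≤ x ^ a) (h₁ : ∀ x ∈ Ioi 1, ‖f x‖ ≤ x ^ b) :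
    IntegrableOn f (Ioi 0) := by
  rw [← Ioc_union_Ioi_eq_Ioi zero_le_one]
  refine IntegrableOn.union ?_ ?_
  · refine Integrable.mono' (g := fun x => x ^ a) ?_ (hf.mono_set Ioc_subset_Ioi_self) ?_
    · exact (intervalIntegrable_iff_integrableOn_Ioc_of_le zero_le_one).1
        (intervalIntegral.intervalIntegrable_rpow' ha)
    · exact (ae_restrict_iff' measurableSet_Ioc).2 (.of_forall h₀)
  · refine Integrable.mono' (integrableOn_Ioi_rpow_of_lt hb one_pos)
      (hf.mono_set (Ioi_subset_Ioi zero_le_one)) ?_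
    exact (ae_restrict_iff' measurableSet_Ioi).2 (.of_forall h₁)

theorem integrableOn_sin_div_rpow {s : ℝ} (hs : s ∈ Ioo (0 : ℝ) 1) :
    IntegrableOn (fun t : ℝ => sin t / t ^ (1 + s)) (Ioi 0) := by
  obtain ⟨hs₀, hs₁⟩ := hs
  refine integrableOn_Ioi_of_norm_le_rpow (a := -s) (b := -(1 + s)) (by linarith) (by linarith)
    (by fun_prop : Measurable _).aestronglyMeasurable (fun t ht => ?_) (fun t ht => ?_)
  · have ht₀ : 0 < t := ht.1
    rw [norm_eq_abs, abs_div, abs_of_pos (rpow_pos_of_pos ht₀ _), div_le_iff₀ (by positivity),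
      ← rpow_add ht₀, show -s + (1 + s) = 1 by ring, rpow_one]
    exact abs_sin_le_abs.trans (abs_of_pos ht₀).le
  · have ht₀ : 0 < t := one_pos.trans ht
    rw [norm_eq_abs, abs_div, abs_of_pos (rpow_pos_of_pos ht₀ _), rpow_neg ht₀.le, ← one_div]
    gcongr
    exact abs_sin_le_one t

theorem integrableOn_rpow_div_one_add_sq {s : ℝ} (hs : s ∈ Ioo (-1 : ℝ) 1) :
    IntegrableOn (fun x : ℝ => x ^ s / (1 + x ^ 2)) (Ioi 0) := by
  obtain ⟨hs₀, hs₁⟩ := hs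
  refine integrableOn_Ioi_of_norm_le_rpow hs₀ (b := s - 2) (by linarith)
    (by fun_prop : Measurable _).aestronglyMeasurable (fun x hx => ?_) (fun x hx => ?_)
  · have hxs : 0 ≤ x ^ s := rpow_nonneg hx.1.le s
    rw [norm_of_nonneg (by positivity)]
    exact div_le_self hxs (by nlinarith)
  · have hx₀ : 0 < x := one_pos.trans hx
    rw [norm_of_nonneg (by positivity), rpow_sub hx₀, rpow_two]
    gcongr
    linarith

theorem integral_exp_neg_mul_mul_sin {x : ℝ} (hx : 0 < x) :
    ∫ t in Ioi (0 : ℝ), exp (-(x * t)) * sin t = 1 / (1 + x ^ 2) := by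
  have ha : (-x + Complex.I).re < 0 := by simpa using hx
  have him (t : ℝ) : exp (-(x * t)) * sin t = (Complex.exp ((-x + Complex.I) * t)).im := by
    simp [Complex.exp_im]
  simp_rw [him, ← RCLike.im_to_complex]
  rw [integral_im (integrableOn_exp_mul_complex_Ioi ha 0), integral_exp_mul_complex_Ioi ha 0]
  simp [Complex.div_im, Complex.normSq_apply]
  ring

theorem integral_rpow_mul_exp_neg_mul {s t : ℝ} (hs : -1 < s) (ht : 0 < t) :
    ∫ x in Ioi (0 : ℝ), x ^ s * exp (-(t * x)) = Gamma (1 + s) / t ^ (1 + s) := by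
  have h := integral_rpow_mul_exp_neg_mul_Ioi (a := 1 + s) (by linarith) ht
  rw [add_sub_cancel_left] at h
  rw [h, one_div, inv_rpow ht.le]
  ring

theorem integrableOn_rpow_mul_exp_neg_mul {s t : ℝ} (hs : -1 < s) (ht : 0 < t) :
    IntegrableOn (fun x : ℝ => x ^ s * exp (-(t * x))) (Ioi 0) := by
  refine .of_integral_ne_zero ?_
  rw [integral_rpow_mul_exp_neg_mul hs ht]
  exact div_ne_zero (Gamma_pos_of_pos (by linarith)).ne' (rpow_pos_of_pos ht _).ne'

theorem integral_rpow_div_one_add_sq {s : ℝ} (hs : s ∈ Ioo (-1 : ℝ) 1) :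
    ∫ x in Ioi (0 : ℝ), x ^ s / (1 + x ^ 2) = Gamma ((1 + s) / 2) * Gamma ((1 - s) / 2) / 2 := by
  have hc (x : ℝ) : -(1 + x ^ 2) < 0 := by nlinarith
  have hlap (x : ℝ) : ∫ y in Ioi (0 : ℝ), exp (-(1 + x ^ 2) * y) = 1 / (1 + x ^ 2) := by
    rw [integral_exp_mul_Ioi (hc x), mul_zero, exp_zero, div_neg, neg_div, neg_neg]
  have hgauss (y : ℝ) (hy : 0 < y) :
      ∫ x in Ioi (0 : ℝ), x ^ s * exp (-(1 + x ^ 2) * y) =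
        1 / 2 * Gamma ((1 + s) / 2) * (exp (-y) * y ^ ((1 - s) / 2 - 1)) := by
    have h := integral_rpow_mul_exp_neg_mul_rpow two_pos hs.1 hy
    simp_rw [rpow_two] at h
    have hsplit (x : ℝ) :
        x ^ s * exp (-(1 + x ^ 2) * y) = exp (-y) * (x ^ s * exp (-y * x ^ 2)) := by
      rw [mul_left_comm, ← exp_add]
      ring_nf
    simp_rw [hsplit, integral_const_mul, h]
    rw [show -(s + 1) / 2 = (1 - s) / 2 - 1 by ring, show (s + 1) / 2 = (1 + s) / 2 by ring]
    ring
  calc ∫ x in Ioi (0 : ℝ), x ^ s / (1 + x ^ 2)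
      = ∫ x in Ioi (0 : ℝ), x ^ s * ∫ y in Ioi (0 : ℝ), exp (-(1 + x ^ 2) * y) := by
        simp_rw [hlap, mul_one_div]
    _ = ∫ y in Ioi (0 : ℝ), ∫ x in Ioi (0 : ℝ), x ^ s * exp (-(1 + x ^ 2) * y) := by
        refine integral_mul_integral_eq_integral_integral_of_nonneg (by fun_prop)
          (.of_forall fun x => ⟨.of_forall fun y => (exp_pos _).le,
            integrableOn_exp_mul_Ioi (hc x) 0⟩) ?_
        simp_rw [hlap, mul_one_div]
        exact integrableOn_rpow_div_one_add_sq hs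
    _ = ∫ y in Ioi (0 : ℝ), 1 / 2 * Gamma ((1 + s) / 2) * (exp (-y) * y ^ ((1 - s) / 2 - 1)) :=
        setIntegral_congr_fun measurableSet_Ioi hgauss
    _ = Gamma ((1 + s) / 2) * Gamma ((1 - s) / 2) / 2 := by
        rw [integral_const_mul, ← Gamma_eq_integral (by linarith [hs.2])]
        ring

theorem integral_sin_div_rpow_eq_integral_rpow_div_one_add_sq {s : ℝ} (hs : s ∈ Ioo (0 : ℝ) 1) :
    ∫ t in Ioi (0 : ℝ), sin t / t ^ (1 + s) =
      (Gamma (1 + s))⁻¹ * ∫ x in Ioi (0 : ℝ), x ^ s / (1 + x ^ 2) := by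
  have hs' : -1 < s := by linarith [hs.1]
  have hΓ : Gamma (1 + s) ≠ 0 := (Gamma_pos_of_pos (by linarith)).ne'
  have hmellin (t : ℝ) (ht : t ∈ Ioi 0) : Gamma (1 + s) * (sin t / t ^ (1 + s)) =
      sin t * ∫ x in Ioi (0 : ℝ), x ^ s * exp (-(t * x)) := by
    rw [integral_rpow_mul_exp_neg_mul hs' ht]
    ring
  have hkernel (t : ℝ) (ht : t ∈ Ioi 0) :
      0 ≤ᵐ[volume.restrict (Ioi 0)] (fun x => x ^ s * exp (-(t * x))) ∧
        IntegrableOn (fun x => x ^ s * exp (-(t * x))) (Ioi 0) := by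
    refine ⟨?_, integrableOn_rpow_mul_exp_neg_mul hs' ht⟩
    filter_upwards [ae_restrict_mem measurableSet_Ioi] with x hx
    exact mul_nonneg (rpow_nonneg (le_of_lt hx) s) (exp_pos _).le
  have hlap (x : ℝ) (hx : x ∈ Ioi 0) :
      ∫ t in Ioi (0 : ℝ), sin t * (x ^ s * exp (-(t * x))) = x ^ s / (1 + x ^ 2) := by
    have hcomm (t : ℝ) : sin t * (x ^ s * exp (-(t * x))) = x ^ s * (exp (-(x * t)) * sin t) := by
      rw [mul_comm t x]
      ring
    simp_rw [hcomm, integral_const_mul, integral_exp_neg_mul_mul_sin hx, mul_one_div]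
  calc ∫ t in Ioi (0 : ℝ), sin t / t ^ (1 + s)
      = (Gamma (1 + s))⁻¹ *
          ∫ t in Ioi (0 : ℝ), sin t * ∫ x in Ioi (0 : ℝ), x ^ s * exp (-(t * x)) := by
        rw [← integral_const_mul]
        refine setIntegral_congr_fun measurableSet_Ioi fun t ht => ?_
        rw [← hmellin t ht, inv_mul_cancel_left₀ hΓ]
    _ = (Gamma (1 + s))⁻¹ * ∫ x in Ioi (0 : ℝ), x ^ s / (1 + x ^ 2) := by
        rw [integral_mul_integral_eq_integral_integral_of_nonneg (by fun_prop)
          ((ae_restrict_iff' measurableSet_Ioi).2 (.of_forall hkernel))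
          (IntegrableOn.congr_fun ((integrableOn_sin_div_rpow hs).const_mul _) hmellin
            measurableSet_Ioi),
          setIntegral_congr_fun measurableSet_Ioi hlap]

/-- For `s ∈ (0,1)`,
`∫₀^∞ sin t / t^{1+s} dt = Γ((1+s)/2) Γ((1-s)/2) / (2 Γ(1+s))`. -/
theorem integral_sin_div_rpow (s : ℝ) (hs : s ∈ Set.Ioo (0 : ℝ) 1) :
    ∫ t in Set.Ioi (0 : ℝ), Real.sin t / t ^ (1 + s)
      = Real.Gamma ((1 + s) / 2) * Real.Gamma ((1 - s) / 2) / (2 * Real.Gamma (1 + s)) := by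
  have hs' : s ∈ Ioo (-1 : ℝ) 1 := ⟨by linarith [hs.1], hs.2⟩
  rw [integral_sin_div_rpow_eq_integral_rpow_div_one_add_sq hs, integral_rpow_div_one_add_sq hs']
  field_simp
end

section
/- Let A be a positive definite n×n real matrix satisfying |ξᵀAψ|² ≤ K·(ξᵀAξ)(ψᵀAψ) for all ξ, ψ ∈ ℝⁿ and some K > 0. Let A_S = (A + Aᵀ)/2 be its symmetric part and B = A⁻¹ its inverse. Then for all ξ, ψ ∈ ℝⁿ, |ξ·ψ| ≤ √(K·(ξᵀA_Sξ)·(ψᵀBψ)). -/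
open Matrix

/-- Let `A` be positive definite (in the sense that `ξᵀAξ > 0`
for all `ξ ≠ 0`, without symmetry) and satisfy `|ξᵀAψ|² ≤ K (ξᵀAξ)(ψᵀAψ)`.
With `A_S = (A + Aᵀ)/2` its symmetric part and `B = A⁻¹`, one has
`|ξ·ψ| ≤ √(K (ξᵀA_Sξ)(ψᵀBψ))`. -/
theorem dot_le_sqrt_symmPart_inv (n : ℕ) (A : Matrix (Fin n) (Fin n) ℝ)
    (K : ℝ) (hK : 0 < K)
    (hpos : ∀ ξ : Fin n → ℝ, ξ ≠ 0 → 0 < ξ ⬝ᵥ (A *ᵥ ξ))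
    (hCS : ∀ ξ ψ : Fin n → ℝ,
      |ξ ⬝ᵥ (A *ᵥ ψ)| ^ 2 ≤ K * ((ξ ⬝ᵥ (A *ᵥ ξ)) * (ψ ⬝ᵥ (A *ᵥ ψ))))
    (ξ ψ : Fin n → ℝ) :
    |ξ ⬝ᵥ ψ|
      ≤ Real.sqrt (K * (ξ ⬝ᵥ (((1 / 2 : ℝ) • (A + Aᵀ)) *ᵥ ξ)) * (ψ ⬝ᵥ (A⁻¹ *ᵥ ψ))) := by
  -- A is invertible
  have hdet : A.det ≠ 0 := by
    intro h
    obtain ⟨v, hv, hAv⟩ := (Matrix.exists_mulVec_eq_zero_iff).2 h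
    have := hpos v hv
    rw [hAv, dotProduct_zero] at this
    exact lt_irrefl 0 this
  set η := A⁻¹ *ᵥ ψ with hη
  have hψ : A *ᵥ η = ψ := by
    rw [hη, Matrix.mulVec_mulVec, Matrix.mul_nonsing_inv A (isUnit_iff_ne_zero.mpr hdet), Matrix.one_mulVec]
  -- scalar transpose trick
  have hsym : ∀ a b : Fin n → ℝ, a ⬝ᵥ (Aᵀ *ᵥ b) = b ⬝ᵥ (A *ᵥ a) := by
    intro a b
    rw [Matrix.mulVec_transpose, dotProduct_comm, ← Matrix.dotProduct_mulVec]
  have h1 : ξ ⬝ᵥ (((1 / 2 : ℝ) • (A + Aᵀ)) *ᵥ ξ) = ξ ⬝ᵥ (A *ᵥ ξ) := by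
    rw [Matrix.smul_mulVec, Matrix.add_mulVec, dotProduct_smul,
      dotProduct_add, hsym ξ ξ, smul_eq_mul]
    ring
  have h2 : ψ ⬝ᵥ (A⁻¹ *ᵥ ψ) = η ⬝ᵥ (A *ᵥ η) := by
    rw [← hη, ← hψ, dotProduct_comm, ← hsym η η, dotProduct_comm]
  have h3 : ξ ⬝ᵥ ψ = ξ ⬝ᵥ (A *ᵥ η) := by rw [hψ]
  have key : |ξ ⬝ᵥ ψ| ^ 2
      ≤ K * (ξ ⬝ᵥ (((1 / 2 : ℝ) • (A + Aᵀ)) *ᵥ ξ)) * (ψ ⬝ᵥ (A⁻¹ *ᵥ ψ)) := by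
    rw [h3, h1, h2, mul_assoc]
    exact hCS ξ η
  calc |ξ ⬝ᵥ ψ| = Real.sqrt (|ξ ⬝ᵥ ψ| ^ 2) := by
        rw [Real.sqrt_sq (abs_nonneg _)]
    _ ≤ _ := Real.sqrt_le_sqrt key
end
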